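/- arXiv:1605.02885 — 3 statements merged into one kernel-verified Lean document; each statement's English description precedes it below -/
import Mathlib

section
/- Fix n ≥ 1 and 1 ≤ i ≤ n, and fix positive reals ℓᵢ,…,ℓₙ with Sᵢ = ∑_{j=i}^n ℓⱼ and Hᵢ the entropy of (ℓᵢ,…,ℓₙ). Among all lists M = (x₁,…,x_{i-1}, ℓᵢ,…,ℓₙ) with x₁,…,x_{i-1} > 0, the entropy H(M) is maximized by taking x₁ = ⋯ = x_{i-1} = Sᵢ / e^{Hᵢ}. -/
/-!
Put `t = S / e^H`. Since `log t = log S - H = (∑ ℓⱼ log ℓⱼ) / S`, `t` is the `ℓ`-weighted geometric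
mean of the tail. For `w = (t,…,t, ℓ)` this makes the cross entropy
`log (∑ w) - (∑ Mᵢ log wᵢ) / ∑ M` of an admissible `M` relative to `w` independent of the free
entries of `M`; at `M = w` it is `H(w)`, so Gibbs' inequality `H(M) ≤ cross entropy` gives
`H(M) ≤ H(w)`.
-/

open Finset

noncomputable def pentropy {ι : Type*} [Fintype ι] (ℓ : ι → ℝ) : ℝ :=
  -∑ i, (ℓ i / ∑ j, ℓ j) * Real.log (ℓ i / ∑ j, ℓ j)

open Real

section

variable {ι : Type*} [Fintype ι]

theorem pentropy_eq_log_sum_sub (w : ι → ℝ) (hw : ∑ i, w i ≠ 0) :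
    pentropy w = log (∑ i, w i) - (∑ i, w i * log (w i)) / ∑ i, w i := by
  have hterm : ∀ i, (w i / ∑ j, w j) * log (w i / ∑ j, w j)
      = (w i * log (w i) - w i * log (∑ j, w j)) / ∑ j, w j := fun i => by
    rcases eq_or_ne (w i) 0 with h | h
    · simp [h]
    · rw [log_div h hw]; ring
  rw [pentropy, sum_congr rfl fun i _ => hterm i, ← sum_div, sum_sub_distrib, ← sum_mul]
  field_simp
  ring

theorem pentropy_le_log_sum_sub (p q : ι → ℝ) (hp : ∀ i, 0 < p i) (hq : ∀ i, 0 < q i) :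
    pentropy p ≤ log (∑ i, q i) - (∑ i, p i * log (q i)) / ∑ i, p i := by
  rcases isEmpty_or_nonempty ι with hι | hι
  · simp [pentropy]
  set P := ∑ i, p i
  set Q := ∑ i, q i
  have hP : 0 < P := sum_pos (fun i _ => hp i) univ_nonempty
  have hQ : 0 < Q := sum_pos (fun i _ => hq i) univ_nonempty
  -- `log x ≤ x - 1` at `x = (qᵢ / Q) / (pᵢ / P)`
  have hterm : ∀ i ∈ univ, p i * log (q i) + p i * log P - p i * log (p i) - p i * log Q
      ≤ q i * (P / Q) - p i := fun i _ => by
    have hpi := hp i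
    have hqi := hq i
    have h := log_le_sub_one_of_pos (x := q i * (P / Q) / p i) (by positivity)
    rw [log_div (by positivity) hpi.ne', log_mul hqi.ne' (by positivity),
      log_div hP.ne' hQ.ne'] at h
    have h' := mul_le_mul_of_nonneg_left h hpi.le
    have hrhs : p i * (q i * (P / Q) / p i - 1) = q i * (P / Q) - p i := by field_simp
    linarith
  have hsum := sum_le_sum hterm
  simp only [sum_sub_distrib, sum_add_distrib, ← sum_mul] at hsum
  rw [mul_div_cancel₀ _ hQ.ne'] at hsum
  have key : ((∑ i, p i * log (q i)) - ∑ i, p i * log (p i)) / P ≤ log Q - log P :=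
    (div_le_iff₀ hP).2 (by linarith)
  rw [sub_div] at key
  rw [pentropy_eq_log_sum_sub p hP.ne']
  linarith

end

theorem sum_elim_mul_log_elim_const {α β : Type*} [Fintype α] [Fintype β]
    (y : α → ℝ) (ℓ : β → ℝ) (c : ℝ) :
    ∑ i, Sum.elim y ℓ i * log (Sum.elim (fun _ => c) ℓ i) =
      (∑ j, y j) * log c + ∑ j, ℓ j * log (ℓ j) := by
  simp [Fintype.sum_sum_type, sum_mul]

/-- `m` plays the role of `i-1` (number of free bars) and `ℓ : Fin k → ℝ`
is the fixed tail `(ℓᵢ,…,ℓₙ)`, nonempty since `i ≤ n`. -/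
theorem entropy_max_at_geometric_mean (m k : ℕ) (hk : 0 < k)
    (ℓ : Fin k → ℝ) (hℓ : ∀ j, 0 < ℓ j)
    (x : Fin m → ℝ) (hx : ∀ j, 0 < x j) :
    pentropy (Sum.elim x ℓ) ≤
      pentropy (Sum.elim (fun _ : Fin m => (∑ j, ℓ j) / Real.exp (pentropy ℓ)) ℓ) := by
  have : Nonempty (Fin k) := ⟨⟨0, hk⟩⟩
  set S := ∑ j, ℓ j
  set A := ∑ j, ℓ j * log (ℓ j)
  set t := S / exp (pentropy ℓ)
  have hS : 0 < S := sum_pos (fun j _ => hℓ j) univ_nonempty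
  have ht : 0 < t := div_pos hS (exp_pos _)
  have hlog_t : log t = A / S := by
    rw [log_div hS.ne' (exp_ne_zero _), log_exp, pentropy_eq_log_sum_sub ℓ hS.ne']
    ring
  set w := Sum.elim (fun _ : Fin m => t) ℓ
  have hw : ∀ i, 0 < w i := Sum.forall.2 ⟨fun _ => ht, hℓ⟩
  have cross : ∀ y : Fin m → ℝ, (∀ j, 0 < y j) →
      (∑ i, Sum.elim y ℓ i * log (w i)) / ∑ i, Sum.elim y ℓ i = A / S := fun y hy => by
    have hY : 0 ≤ ∑ j, y j := sum_nonneg fun j _ => (hy j).le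
    rw [sum_elim_mul_log_elim_const, Fintype.sum_sum_type, hlog_t]
    change ((∑ j, y j) * (A / S) + A) / (∑ j, y j + S) = A / S
    field_simp
  calc pentropy (Sum.elim x ℓ)
      ≤ log (∑ i, w i) - (∑ i, Sum.elim x ℓ i * log (w i)) / ∑ i, Sum.elim x ℓ i :=
        pentropy_le_log_sum_sub _ _ (Sum.forall.2 ⟨hx, hℓ⟩) hw
    _ = log (∑ i, w i) - (∑ i, w i * log (w i)) / ∑ i, w i := by
        rw [cross x hx]
        exact congrArg _ (cross _ fun _ => ht).symm
    _ = pentropy w :=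
        (pentropy_eq_log_sum_sub w (sum_pos (fun i _ => hw i) univ_nonempty).ne').symm
end

section
/- Let ℓ₁ ≥ ℓ₂ ≥ ⋯ ≥ ℓₙ > 0, and for each i let L'(i) be the list obtained by replacing ℓ₁,…,ℓ_{i-1} with i−1 copies of Sᵢ/e^{Hᵢ}, where Sᵢ = ∑_{j=i}^n ℓⱼ and Hᵢ is the entropy of (ℓᵢ,…,ℓₙ). Then the entropy of the original list L satisfies H(L) ≤ H(L'(i)) for every i. -/
/-!
Put `c = Sᵢ / e^{Hᵢ}`. Then `log c` is the `ℓ`-weighted mean of `log ℓ` over the tail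
`ℓᵢ,…,ℓₙ`. For `g = L'(i)` it follows that `log c` is both the `ℓ`-weighted and the
`g`-weighted mean of `log g` over the whole list. The first fact makes `log (∑ g) - log c` the
cross-entropy of `ℓ` relative to `g`, the second makes it `H(g)`, and Gibbs' inequality bounds
`H(ℓ)` by the cross-entropy.
-/

open Finset

/-- Persistent entropy of the bars `f t` for `t` in the index set `s`. -/
noncomputable def pentropyOn (s : Finset ℕ) (f : ℕ → ℝ) : ℝ :=
  -∑ i ∈ s, (f i / ∑ j ∈ s, f j) * Real.log (f i / ∑ j ∈ s, f j)

open Real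

section General

variable {ι : Type*} {s : Finset ι} {f g : ι → ℝ}

/-- Gibbs' inequality, in the form of the log-sum inequality. -/
theorem sum_mul_log_div_le (hs : s.Nonempty) (hf : ∀ t ∈ s, 0 < f t)
    (hg : ∀ t ∈ s, 0 < g t) :
    ∑ t ∈ s, f t * log (g t / f t) ≤
      (∑ t ∈ s, f t) * log ((∑ t ∈ s, g t) / ∑ t ∈ s, f t) := by
  have hF : 0 < ∑ t ∈ s, f t := sum_pos hf hs
  have hfg : ∑ t ∈ s, f t * (g t / f t) = ∑ t ∈ s, g t :=
    sum_congr rfl fun t ht => mul_div_cancel₀ _ (hf t ht).ne'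
  have jensen := strictConcaveOn_log_Ioi.concaveOn.le_map_centerMass
    (fun t ht => (hf t ht).le) hF (p := fun t => g t / f t)
    fun t ht => div_pos (hg t ht) (hf t ht)
  simp only [centerMass, smul_eq_mul, Function.comp_def, hfg, inv_mul_eq_div,
    div_le_iff₀ hF] at jensen
  linarith

theorem sum_mul_log_ite_eq (p : ι → Prop) [DecidablePred p] (w : ι → ℝ) (c : ℝ)
    (hw : ∀ t ∈ s, ¬p t → w t = f t)
    (htail : ∑ t ∈ s with ¬p t, f t * log (f t) = (∑ t ∈ s with ¬p t, f t) * log c) :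
    ∑ t ∈ s, w t * log (if p t then c else f t) = (∑ t ∈ s, w t) * log c := by
  have hhead : ∑ t ∈ s with p t, w t * log (if p t then c else f t) =
      (∑ t ∈ s with p t, w t) * log c := by
    rw [sum_mul]
    exact sum_congr rfl fun t ht => by rw [if_pos (mem_filter.1 ht).2]
  have hw' : ∀ t ∈ s.filter (¬p ·), w t = f t := fun t ht =>
    hw t (mem_filter.1 ht).1 (mem_filter.1 ht).2
  have hrest : ∑ t ∈ s with ¬p t, w t * log (if p t then c else f t) =
      ∑ t ∈ s with ¬p t, f t * log (f t) :=
    sum_congr rfl fun t ht => by rw [if_neg (mem_filter.1 ht).2, hw' t ht]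
  rw [← sum_filter_add_sum_filter_not s p, hhead, hrest, htail, ← sum_congr rfl hw',
    ← add_mul, sum_filter_add_sum_filter_not]

end General

section Entropy

variable {s : Finset ℕ} {f g : ℕ → ℝ}

theorem pentropyOn_eq_log_sum_sub (hs : s.Nonempty) (hf : ∀ t ∈ s, 0 < f t) :
    pentropyOn s f =
      log (∑ t ∈ s, f t) - (∑ t ∈ s, f t * log (f t)) / ∑ t ∈ s, f t := by
  have hF : 0 < ∑ t ∈ s, f t := sum_pos hf hs
  have hterm : ∀ t ∈ s, f t / (∑ j ∈ s, f j) * log (f t / ∑ j ∈ s, f j) =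
      (f t * log (f t) - f t * log (∑ j ∈ s, f j)) / ∑ j ∈ s, f j := fun t ht => by
    rw [log_div (hf t ht).ne' hF.ne']
    ring
  rw [pentropyOn, sum_congr rfl hterm, ← sum_div, sum_sub_distrib, ← sum_mul]
  field_simp
  ring

theorem log_sum_div_exp_pentropyOn (hs : s.Nonempty) (hf : ∀ t ∈ s, 0 < f t) :
    log ((∑ t ∈ s, f t) / exp (pentropyOn s f)) =
      (∑ t ∈ s, f t * log (f t)) / ∑ t ∈ s, f t := by
  rw [log_div (sum_pos hf hs).ne' (exp_pos _).ne', log_exp, pentropyOn_eq_log_sum_sub hs hf]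
  ring

theorem pentropyOn_le_log_sum_sub (hs : s.Nonempty) (hf : ∀ t ∈ s, 0 < f t)
    (hg : ∀ t ∈ s, 0 < g t) :
    pentropyOn s f ≤
      log (∑ t ∈ s, g t) - (∑ t ∈ s, f t * log (g t)) / ∑ t ∈ s, f t := by
  have hF : 0 < ∑ t ∈ s, f t := sum_pos hf hs
  have hgibbs := sum_mul_log_div_le hs hf hg
  rw [sum_congr rfl fun t ht => by rw [log_div (hg t ht).ne' (hf t ht).ne', mul_sub],
    sum_sub_distrib, log_div (sum_pos hg hs).ne' hF.ne'] at hgibbs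
  have hmean : (∑ t ∈ s, f t * log (g t)) / (∑ t ∈ s, f t) -
      (∑ t ∈ s, f t * log (f t)) / (∑ t ∈ s, f t) ≤
      log (∑ t ∈ s, g t) - log (∑ t ∈ s, f t) := by
    rw [← sub_div, div_le_iff₀ hF]
    linarith
  rw [pentropyOn_eq_log_sum_sub hs hf]
  linarith

theorem pentropyOn_le_of_sum_mul_log_eq (hs : s.Nonempty) (hf : ∀ t ∈ s, 0 < f t)
    (hg : ∀ t ∈ s, 0 < g t) (c : ℝ)
    (hcross : ∑ t ∈ s, f t * log (g t) = (∑ t ∈ s, f t) * log c)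
    (hself : ∑ t ∈ s, g t * log (g t) = (∑ t ∈ s, g t) * log c) :
    pentropyOn s f ≤ pentropyOn s g := by
  have hcross_entropy := pentropyOn_le_log_sum_sub hs hf hg
  rwa [hcross, mul_div_cancel_left₀ _ (sum_pos hf hs).ne',
    ← mul_div_cancel_left₀ (log c) (sum_pos hg hs).ne', ← hself,
    ← pentropyOn_eq_log_sum_sub hs hg] at hcross_entropy

theorem pentropyOn_le_pentropyOn_ite (hs : s.Nonempty) (hf : ∀ t ∈ s, 0 < f t)
    (p : ℕ → Prop) [DecidablePred p] {c : ℝ} (hc : 0 < c)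
    (htail : ∑ t ∈ s with ¬p t, f t * log (f t) = (∑ t ∈ s with ¬p t, f t) * log c) :
    pentropyOn s f ≤ pentropyOn s (fun t => if p t then c else f t) := by
  refine pentropyOn_le_of_sum_mul_log_eq hs hf (fun t ht => ?_) c
    (sum_mul_log_ite_eq p f c (fun _ _ _ => rfl) htail)
    (sum_mul_log_ite_eq p _ c (fun _ _ hpt => if_neg hpt) htail)
  split_ifs
  exacts [hc, hf t ht]

end Entropy

theorem entropy_le_replaced_general (n : ℕ) (ℓ : ℕ → ℝ)
    (hpos : ∀ t ∈ Finset.Icc 1 n, 0 < ℓ t)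
    (i : ℕ) (hi1 : 1 ≤ i) (hin : i ≤ n) :
    pentropyOn (Finset.Icc 1 n) ℓ ≤
      pentropyOn (Finset.Icc 1 n)
        (fun t => if t < i then
            (∑ j ∈ Finset.Icc i n, ℓ j) / Real.exp (pentropyOn (Finset.Icc i n) ℓ)
          else ℓ t) := by
  have htail_eq : {t ∈ Icc 1 n | ¬t < i} = Icc i n := by
    ext t
    simp only [mem_filter, mem_Icc, not_lt]
    omega
  have htail_pos : ∀ t ∈ Icc i n, 0 < ℓ t := fun t ht => hpos t (by
    simp only [mem_Icc] at ht ⊢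
    omega)
  have htail_ne : (Icc i n).Nonempty := nonempty_Icc.2 hin
  refine pentropyOn_le_pentropyOn_ite (nonempty_Icc.2 (hi1.trans hin)) hpos (· < i)
    (div_pos (sum_pos htail_pos htail_ne) (exp_pos _)) ?_
  rw [htail_eq, log_sum_div_exp_pentropyOn htail_ne htail_pos,
    mul_div_cancel₀ _ (sum_pos htail_pos htail_ne).ne']

/-- Bars are indexed by `1,…,n`, in decreasing order.  `L'(i)` replaces the
first `i-1` bars by copies of `Sᵢ / e^{Hᵢ}`, where `Sᵢ` and `Hᵢ` are the sum
and entropy of the tail `(ℓᵢ,…,ℓₙ)`. -/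
theorem entropy_le_replaced (n : ℕ) (ℓ : ℕ → ℝ)
    (hpos : ∀ t ∈ Finset.Icc 1 n, 0 < ℓ t)
    (hdec : ∀ s ∈ Finset.Icc 1 n, ∀ t ∈ Finset.Icc 1 n, s ≤ t → ℓ t ≤ ℓ s)
    (i : ℕ) (hi1 : 1 ≤ i) (hin : i ≤ n) :
    pentropyOn (Finset.Icc 1 n) ℓ ≤
      pentropyOn (Finset.Icc 1 n)
        (fun t => if t < i then
            (∑ j ∈ Finset.Icc i n, ℓ j) / Real.exp (pentropyOn (Finset.Icc i n) ℓ)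
          else ℓ t) :=
  entropy_le_replaced_general n ℓ hpos i hi1 hin
end

section
/- For a finite set V of points in the plane ℝ², the Vietoris–Rips complex at scale r is contained in the Čech complex at scale √2·r: VR_r(V) ⊆ Č_{√2 r}(V). -/
/-!
The centre of the axis-parallel bounding box of `S` works: each side of the box is the
difference of two coordinates of points of `S`, hence at most `r`, so every point of `S` is
within `r / 2` of the centre in each coordinate, and within `√n · r / 2` in `ℝⁿ`.
-/

open Finset

namespace EuclideanSpace

variable {ι : Type*} [Fintype ι]

theorem dist_le_sqrt_card_mul_of_forall_dist_apply_le {x y : EuclideanSpace ℝ ι} {c : ℝ}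
    (hc : 0 ≤ c) (h : ∀ i, dist (x i) (y i) ≤ c) : dist x y ≤ √(Fintype.card ι) * c := by
  calc dist x y = √(∑ i, dist (x i : ℝ) (y i) ^ 2) := EuclideanSpace.dist_eq x y
    _ ≤ √(∑ _i : ι, c ^ 2) := by gcongr with i; exact h i
    _ = √(Fintype.card ι) * c := by
      rw [sum_const, card_univ, nsmul_eq_mul, Real.sqrt_mul (Nat.cast_nonneg _),
        Real.sqrt_sq hc]

noncomputable def boundingBoxCenter (S : Finset (EuclideanSpace ℝ ι)) (hS : S.Nonempty) :
    EuclideanSpace ℝ ι :=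
  WithLp.toLp 2 fun i => (S.inf' hS (· i) + S.sup' hS (· i)) / 2

theorem dist_apply_boundingBoxCenter_le {S : Finset (EuclideanSpace ℝ ι)} (hS : S.Nonempty)
    {r : ℝ} (h : ∀ u ∈ S, ∀ v ∈ S, dist u v ≤ r) {v : EuclideanSpace ℝ ι} (hv : v ∈ S)
    (i : ι) : dist (v i) (boundingBoxCenter S hS i) ≤ r / 2 := by
  obtain ⟨a, ha, hinf⟩ := S.exists_mem_eq_inf' hS (· i)
  obtain ⟨b, hb, hsup⟩ := S.exists_mem_eq_sup' hS (· i)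
  have hav : a i ≤ v i := hinf ▸ S.inf'_le (· i) hv
  have hvb : v i ≤ b i := hsup ▸ S.le_sup' (· i) hv
  have hab : b i - a i ≤ r :=
    calc b i - a i ≤ dist (b i) (a i) := le_abs_self _
      _ ≤ dist b a := PiLp.dist_apply_le b a i
      _ ≤ r := h b hb a ha
  simp only [boundingBoxCenter, hinf, hsup, Real.dist_eq]
  rw [abs_le]
  constructor <;> linarith

theorem exists_forall_dist_le_sqrt_card_mul_half {S : Finset (EuclideanSpace ℝ ι)}
    (hS : S.Nonempty) {r : ℝ} (h : ∀ u ∈ S, ∀ v ∈ S, dist u v ≤ r) :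
    ∃ p : EuclideanSpace ℝ ι, ∀ v ∈ S, dist v p ≤ √(Fintype.card ι) * r / 2 := by
  obtain ⟨x, hx⟩ := hS
  have hr : 0 ≤ r / 2 := by linarith [dist_nonneg.trans (h x hx x hx)]
  refine ⟨boundingBoxCenter S ⟨x, hx⟩, fun v hv => ?_⟩
  rw [mul_div_assoc]
  exact dist_le_sqrt_card_mul_of_forall_dist_apply_le hr
    (dist_apply_boundingBoxCenter_le ⟨x, hx⟩ h hv)

end EuclideanSpace

theorem rips_subset_cech_plane_general
    (r : ℝ) (S : Finset (EuclideanSpace ℝ (Fin 2)))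
    (hS : S.Nonempty)
    (h : ∀ u ∈ S, ∀ v ∈ S, dist u v ≤ r) :
    ∃ p : EuclideanSpace ℝ (Fin 2), ∀ v ∈ S, dist v p ≤ Real.sqrt 2 * r / 2 := by
  simpa using EuclideanSpace.exists_forall_dist_le_sqrt_card_mul_half hS h

/-- Vietoris–Rips ⊆ Čech at scale `√2·r` in the plane: if all pairwise
distances in `S` are at most `r`, then the closed balls of radius
`(√2·r)/2` around the points of `S` have a common point. -/
theorem rips_subset_cech_plane (V : Finset (EuclideanSpace ℝ (Fin 2)))
    (r : ℝ) (S : Finset (EuclideanSpace ℝ (Fin 2))) (hSV : S ⊆ V)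
    (hS : S.Nonempty)
    (h : ∀ u ∈ S, ∀ v ∈ S, dist u v ≤ r) :
    ∃ p : EuclideanSpace ℝ (Fin 2), ∀ v ∈ S, dist v p ≤ Real.sqrt 2 * r / 2 :=
  rips_subset_cech_plane_general r S hS h
end
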